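/- arXiv:nlin/0501051 — 2 statements merged into one kernel-verified Lean document; each statement's English description precedes it below -/
import Mathlib

section
/- The basic hypergeometric series ₂φ₁(α₁, α₂; 0; q, z) (with lower parameter 0) satisfies the three-term relation in z: (α₁α₂z/q)(Φ(qz) − Φ(z)) + (z/q)(1−α₁)(1−α₂)Φ(z) + (z/q − 1)(Φ(z/q) − Φ(z)) = 0. -/
open scoped BigOperators

/-- The q-Pochhammer symbol (a;q)_n. -/
noncomputable def qPoch (a q : ℂ) (n : ℕ) : ℂ :=
  ∏ k ∈ Finset.range n, (1 - a * q ^ k)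

/-- The basic hypergeometric series ₂φ₁(a, b; 0; q, z) with lower parameter 0. -/
noncomputable def phi21 (a b q z : ℂ) : ℂ :=
  ∑' n : ℕ, qPoch a q n * qPoch b q n / qPoch q q n * z ^ n

/-- Coefficients of the series. -/
noncomputable def cc (a b q : ℂ) (n : ℕ) : ℂ :=
  qPoch a q n * qPoch b q n / qPoch q q n

lemma one_sub_q_pow_ne (q : ℂ) (hq : ‖q‖ < 1) (k : ℕ) : 1 - q * q ^ k ≠ 0 := by
  intro h
  have h1 : q * q ^ k = 1 := by linear_combination -h
  have : ‖q * q ^ k‖ < 1 := by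
    have h0 : (0:ℝ) ≤ ‖q‖ := norm_nonneg _
    calc ‖q * q ^ k‖ = ‖q‖ * ‖q‖ ^ k := by rw [norm_mul, norm_pow]
    _ ≤ ‖q‖ * 1 := by
        apply mul_le_mul_of_nonneg_left _ h0
        exact pow_le_one₀ h0 hq.le
    _ < 1 := by simpa using hq
  rw [h1] at this
  simp at this

lemma qPoch_q_ne (q : ℂ) (hq : ‖q‖ < 1) (n : ℕ) : qPoch q q n ≠ 0 := by
  refine Finset.prod_ne_zero_iff.2 fun k _ => one_sub_q_pow_ne q hq k

lemma cc_succ (a b q : ℂ) (hq : ‖q‖ < 1) (n : ℕ) :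
    cc a b q (n + 1)
      = cc a b q n * ((1 - a * q ^ n) * (1 - b * q ^ n) / (1 - q * q ^ n)) := by
  unfold cc qPoch
  rw [Finset.prod_range_succ, Finset.prod_range_succ, Finset.prod_range_succ]
  have h1 := qPoch_q_ne q hq n
  unfold qPoch at h1
  have h2 := one_sub_q_pow_ne q hq n
  field_simp

lemma summable_cc (a b q w : ℂ) (hq : ‖q‖ < 1) (hw : ‖w‖ < 1) :
    Summable (fun n => cc a b q n * w ^ n) := by
  apply summable_of_ratio_norm_eventually_le (r := (1 + ‖w‖) / 2)
  · linarith
  · have hq0 : Filter.Tendsto (fun n : ℕ => q ^ n) Filter.atTop (nhds 0) :=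
      tendsto_pow_atTop_nhds_zero_of_norm_lt_one hq
    have hrho : Filter.Tendsto
        (fun n : ℕ => ‖w‖ * ‖(1 - a * q ^ n) * (1 - b * q ^ n) / (1 - q * q ^ n)‖)
        Filter.atTop (nhds (‖w‖ * ‖(1 - a * 0) * (1 - b * 0) / (1 - q * 0)‖)) := by
      apply Filter.Tendsto.const_mul
      apply Filter.Tendsto.norm
      apply Filter.Tendsto.div
      · exact (((tendsto_const_nhds.sub (hq0.const_mul a))).mul
          ((tendsto_const_nhds.sub (hq0.const_mul b))))
      · exact tendsto_const_nhds.sub (hq0.const_mul q)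
      · simp
    simp only [mul_zero, sub_zero, mul_one, div_one, norm_one] at hrho
    have hlt : ‖w‖ < (1 + ‖w‖) / 2 := by linarith
    have hev := hrho.eventually_lt_const hlt
    filter_upwards [hev] with n hn
    have hrec : cc a b q (n + 1) * w ^ (n + 1)
        = (w * ((1 - a * q ^ n) * (1 - b * q ^ n) / (1 - q * q ^ n)))
          * (cc a b q n * w ^ n) := by
      rw [cc_succ a b q hq n, pow_succ]; ring
    rw [hrec, norm_mul, norm_mul]
    exact mul_le_mul_of_nonneg_right hn.le (norm_nonneg _)

/-- Three-term relation in z for ₂φ₁(α₁, α₂; 0; q, z). -/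
theorem phi21_three_term (q z α₁ α₂ : ℂ) (hq : ‖q‖ < 1) (hq0 : q ≠ 0)
    (hz : ‖z‖ < ‖q‖) :
    (α₁ * α₂ * z / q) * (phi21 α₁ α₂ q (q * z) - phi21 α₁ α₂ q z)
      + (z / q) * (1 - α₁) * (1 - α₂) * phi21 α₁ α₂ q z
      + (z / q - 1) * (phi21 α₁ α₂ q (z / q) - phi21 α₁ α₂ q z) = 0 := by
  have hqpos : (0:ℝ) < ‖q‖ := norm_pos_iff.2 hq0
  have hz1 : ‖z‖ < 1 := hz.trans hq
  have hqz : ‖q * z‖ < 1 := by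
    rw [norm_mul]
    calc ‖q‖ * ‖z‖ ≤ 1 * ‖z‖ := mul_le_mul_of_nonneg_right hq.le (norm_nonneg _)
    _ = ‖z‖ := one_mul _
    _ < 1 := hz1
  have hzq : ‖z / q‖ < 1 := by
    rw [norm_div, div_lt_one hqpos]; exact hz
  set c : ℕ → ℂ := cc α₁ α₂ q with hc
  have S1 : Summable (fun n => c n * (q * z) ^ n) := summable_cc _ _ _ _ hq hqz
  have S2 : Summable (fun n => c n * z ^ n) := summable_cc _ _ _ _ hq hz1
  have S3 : Summable (fun n => c n * (z / q) ^ n) := summable_cc _ _ _ _ hq hzq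
  set e : ℕ → ℂ := fun n => c n * ((z / q) ^ n - z ^ n) with he
  have hsum_e : Summable e := by
    have := S3.sub S2
    simpa [he, mul_sub] using this
  have hsum_e1 : Summable (fun n => e (n + 1)) := (summable_nat_add_iff 1).2 hsum_e
  have key : ∀ n : ℕ,
      (α₁ * α₂ * z / q) * (c n * (q * z) ^ n - c n * z ^ n)
        + (z / q) * (1 - α₁) * (1 - α₂) * (c n * z ^ n)
        + (z / q - 1) * (c n * (z / q) ^ n - c n * z ^ n)
      = e (n + 1) - e n := by
    intro n
    have hQ : q ^ n ≠ 0 := pow_ne_zero n hq0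
    have hden : 1 - q * q ^ n ≠ 0 := one_sub_q_pow_ne q hq n
    simp only [he, hc, cc_succ α₁ α₂ q hq n]
    simp only [mul_pow, div_pow, pow_succ]
    field_simp
    ring
  have h1 : phi21 α₁ α₂ q (q * z) = ∑' n, c n * (q * z) ^ n := rfl
  have h2 : phi21 α₁ α₂ q z = ∑' n, c n * z ^ n := rfl
  have h3 : phi21 α₁ α₂ q (z / q) = ∑' n, c n * (z / q) ^ n := rfl
  have HA : Summable (fun n => (α₁ * α₂ * z / q) * (c n * (q * z) ^ n - c n * z ^ n)) :=
    (S1.sub S2).mul_left _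
  have HB : Summable (fun n => (z / q) * (1 - α₁) * (1 - α₂) * (c n * z ^ n)) :=
    S2.mul_left _
  have HC : Summable (fun n => (z / q - 1) * (c n * (z / q) ^ n - c n * z ^ n)) :=
    (S3.sub S2).mul_left _
  calc (α₁ * α₂ * z / q) * (phi21 α₁ α₂ q (q * z) - phi21 α₁ α₂ q z)
      + (z / q) * (1 - α₁) * (1 - α₂) * phi21 α₁ α₂ q z
      + (z / q - 1) * (phi21 α₁ α₂ q (z / q) - phi21 α₁ α₂ q z)
      = ∑' n, ((α₁ * α₂ * z / q) * (c n * (q * z) ^ n - c n * z ^ n)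
          + (z / q) * (1 - α₁) * (1 - α₂) * (c n * z ^ n)
          + (z / q - 1) * (c n * (z / q) ^ n - c n * z ^ n)) := by
        rw [h1, h2, h3, ← Summable.tsum_sub S1 S2, ← Summable.tsum_sub S3 S2,
          ← tsum_mul_left (a := α₁ * α₂ * z / q),
          ← tsum_mul_left (a := (z / q) * (1 - α₁) * (1 - α₂)),
          ← tsum_mul_left (a := z / q - 1),
          ← Summable.tsum_add HA HB, ← Summable.tsum_add (HA.add HB) HC]
    _ = ∑' n, (e (n + 1) - e n) := tsum_congr key
    _ = (∑' n, e (n + 1)) - ∑' n, e n := Summable.tsum_sub hsum_e1 hsum_e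
    _ = 0 := by
        rw [Summable.tsum_eq_zero_add hsum_e]
        have he0 : e 0 = 0 := by simp [he]
        rw [he0, zero_add, sub_self]
end

section
/- The series ₂φ₁(α₁, α₂; 0; q, z) satisfies the contiguity relation Φ(α₁,α₂/q,z) − Φ(α₁,α₂,z) = −(α₂z/q)(1−α₁)Φ(qα₁,α₂,z). -/
/-! The shift `α₂ ↦ α₂ / q` changes only the first factor of `(α₂;q)_{n+1}`:
`(α₂/q;q)_{n+1} - (α₂;q)_{n+1} = -(α₂/q)(1 - q^{n+1})(α₂;q)_n`. The factor `1 - q^{n+1}` cancels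
the last factor of `(q;q)_{n+1}`, and `(α₁;q)_{n+1} = (1 - α₁)(qα₁;q)_n`, so the `(n+1)`-st term of
the difference is `-(α₂z/q)(1 - α₁)` times the `n`-th term of `Φ(qα₁, α₂, z)`, while the constant
terms cancel. All three series converge by the ratio test: consecutive terms have ratio
`(1 - a qⁿ)(1 - b qⁿ)/(1 - q^{n+1}) z → z`. -/

open scoped BigOperators

open Filter Topology

lemma pow_ne_one_of_norm_lt_one {𝕜 : Type*} [NormedDivisionRing 𝕜] {x : 𝕜} (hx : ‖x‖ < 1)
    {n : ℕ} (hn : n ≠ 0) : x ^ n ≠ 1 := by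
  intro h
  have := congrArg norm h
  rw [norm_pow, norm_one] at this
  exact (pow_lt_one₀ (norm_nonneg x) hx hn).ne this

@[simp]
lemma qPoch_zero (a q : ℂ) : qPoch a q 0 = 1 := Finset.prod_range_zero _

lemma qPoch_succ (a q : ℂ) (n : ℕ) : qPoch a q (n + 1) = qPoch a q n * (1 - a * q ^ n) :=
  Finset.prod_range_succ _ _

lemma qPoch_succ' (a q : ℂ) (n : ℕ) : qPoch a q (n + 1) = (1 - a) * qPoch (q * a) q n := by
  rw [qPoch, Finset.prod_range_succ', mul_comm, qPoch, pow_zero, mul_one]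
  congr 1
  exact Finset.prod_congr rfl fun k _ => by ring

lemma qPoch_div_succ_sub_qPoch_succ {q : ℂ} (hq : q ≠ 0) (b : ℂ) (n : ℕ) :
    qPoch (b / q) q (n + 1) - qPoch b q (n + 1) = -(b / q) * (1 - q ^ (n + 1)) * qPoch b q n := by
  rw [qPoch_succ', mul_div_cancel₀ b hq, qPoch_succ]
  field_simp
  ring

noncomputable def phi21Term (a b q z : ℂ) (n : ℕ) : ℂ :=
  qPoch a q n * qPoch b q n / qPoch q q n * z ^ n

lemma phi21Term_succ (a b q z : ℂ) (n : ℕ) :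
    phi21Term a b q z (n + 1) =
      phi21Term a b q z n * ((1 - a * q ^ n) * (1 - b * q ^ n) / (1 - q ^ (n + 1)) * z) := by
  simp only [phi21Term, qPoch_succ, ← pow_succ']
  rw [mul_mul_mul_comm, mul_div_mul_comm, pow_succ]
  ring

lemma tendsto_phi21Term_ratio {q : ℂ} (hq : ‖q‖ < 1) (a b z : ℂ) :
    Tendsto (fun n : ℕ => (1 - a * q ^ n) * (1 - b * q ^ n) / (1 - q ^ (n + 1)) * z)
      atTop (𝓝 z) := by
  have hpow : Tendsto (fun n : ℕ => q ^ n) atTop (𝓝 0) :=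
    tendsto_pow_atTop_nhds_zero_of_norm_lt_one hq
  have hpow' : Tendsto (fun n : ℕ => q ^ (n + 1)) atTop (𝓝 0) :=
    hpow.comp (tendsto_add_atTop_nat 1)
  have := ((((tendsto_const_nhds (x := (1 : ℂ))).sub (hpow.const_mul a)).mul
    ((tendsto_const_nhds (x := (1 : ℂ))).sub (hpow.const_mul b))).div
    ((tendsto_const_nhds (x := (1 : ℂ))).sub hpow') (by simp)).mul_const z
  simpa using this

lemma summable_phi21Term {q z : ℂ} (hq : ‖q‖ < 1) (hz : ‖z‖ < 1) (a b : ℂ) :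
    Summable (phi21Term a b q z) := by
  obtain ⟨r, hzr, hr1⟩ := exists_between hz
  refine summable_of_ratio_norm_eventually_le hr1 ?_
  filter_upwards [(tendsto_phi21Term_ratio hq a b z).norm.eventually (gt_mem_nhds hzr)] with n hn
  rw [phi21Term_succ, norm_mul, mul_comm]
  exact mul_le_mul_of_nonneg_right hn.le (norm_nonneg _)

lemma phi21Term_contiguity₂ {q : ℂ} (hq0 : q ≠ 0) (z α₁ α₂ : ℂ) {n : ℕ} (hqn : q ^ (n + 1) ≠ 1) :
    phi21Term α₁ (α₂ / q) q z (n + 1) - phi21Term α₁ α₂ q z (n + 1)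
      = -(α₂ * z / q) * (1 - α₁) * phi21Term (q * α₁) α₂ q z n := by
  have hqn' : 1 - q ^ (n + 1) ≠ 0 := sub_ne_zero.2 hqn.symm
  simp only [phi21Term]
  rw [← sub_mul, ← sub_div, ← mul_sub, qPoch_div_succ_sub_qPoch_succ hq0, qPoch_succ',
    qPoch_succ q q n, ← pow_succ']
  field_simp
  ring

/-- Contiguity relation Φ(α₁,α₂/q,z) − Φ(α₁,α₂,z) = −(α₂z/q)(1−α₁)Φ(qα₁,α₂,z). -/
theorem phi21_contiguity₂ (q z α₁ α₂ : ℂ) (hq : ‖q‖ < 1) (hq0 : q ≠ 0)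
    (hz : ‖z‖ < 1) :
    phi21 α₁ (α₂ / q) q z - phi21 α₁ α₂ q z
      = -(α₂ * z / q) * (1 - α₁) * phi21 (q * α₁) α₂ q z := by
  have hsum (a b : ℂ) := summable_phi21Term hq hz a b
  change ∑' n, phi21Term _ _ q z n - ∑' n, phi21Term _ _ q z n = _ * ∑' n, phi21Term _ _ q z n
  rw [← (hsum _ _).tsum_sub (hsum _ _), ((hsum _ _).sub (hsum _ _)).tsum_eq_zero_add,
    ← tsum_mul_left]
  simp only [phi21Term, qPoch_zero, pow_zero, sub_self, zero_add]
  exact tsum_congr fun n =>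
    phi21Term_contiguity₂ hq0 z α₁ α₂ (pow_ne_one_of_norm_lt_one hq n.succ_ne_zero)
end
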